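/- For a right S-act C over a monoid S, C is InD-injective if and only if for every right S-act B containing C as a subact and every family (c_i)_{i∈I} of elements of C that generates an indecomposable subact of C, there exists a homomorphism f : B → C such that f(c_i) = c_i for every i ∈ I. -/
import Mathlib


universe u

/-- A right `S`-act structure on a nonempty type `A`: a right action of the monoid `S`. -/
class RightAct (S : Type u) [Monoid S] (A : Type u) : Type u where
  act : A → S → A
  act_one : ∀ a : A, act a 1 = a
  act_mul : ∀ (a : A) (s t : S), act (act a s) t = act a (s * t)
  nonempty : Nonempty A

infixl:70 " ⊛ " => RightAct.act

/-- `S` is left reversible: every two right ideals (equiv. principal ones) intersect. -/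
def LeftReversible (S : Type u) [Monoid S] : Prop :=
  ∀ a b : S, ∃ u v : S, a * u = b * v

/-- A left zero element of the monoid `S`. -/
def IsLeftZero (S : Type u) [Monoid S] (z : S) : Prop :=
  ∀ s : S, z * s = z

/-- `f : A → B` is a homomorphism of right `S`-acts. -/
def IsActHom (S : Type u) [Monoid S] {A B : Type u} [RightAct S A] [RightAct S B]
    (f : A → B) : Prop :=
  ∀ (a : A) (s : S), f (a ⊛ s) = f a ⊛ s

/-- The restriction of `f : A → B` to the subset `C` is a homomorphism of right `S`-acts. -/
def IsActHomOn (S : Type u) [Monoid S] {A B : Type u} [RightAct S A] [RightAct S B]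
    (f : A → B) (C : Set A) : Prop :=
  ∀ a ∈ C, ∀ s : S, f (a ⊛ s) = f a ⊛ s

/-- A subact: a nonempty subset closed under the action. -/
def IsSubact (S : Type u) [Monoid S] {A : Type u} [RightAct S A] (C : Set A) : Prop :=
  C.Nonempty ∧ ∀ a ∈ C, ∀ s : S, a ⊛ s ∈ C

/-- A zero element of an act: fixed by the action of every `s ∈ S`. -/
def IsZeroElem (S : Type u) [Monoid S] {A : Type u} [RightAct S A] (θ : A) : Prop :=
  ∀ s : S, θ ⊛ s = θ

/-- A subset `D` (viewed as an act) is decomposable: it is the disjoint union of two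
nonempty subacts. -/
def DecomposableSet (S : Type u) [Monoid S] {A : Type u} [RightAct S A] (D : Set A) : Prop :=
  ∃ B C : Set A, IsSubact S B ∧ IsSubact S C ∧ B ∪ C = D ∧ B ∩ C = ∅

/-- A subset (viewed as an act) is indecomposable. -/
def IndecomposableSet (S : Type u) [Monoid S] {A : Type u} [RightAct S A] (D : Set A) : Prop :=
  ¬ DecomposableSet S D

/-- The act `A` is decomposable. -/
def Decomposable (S : Type u) [Monoid S] (A : Type u) [RightAct S A] : Prop :=
  DecomposableSet S (Set.univ : Set A)

/-- The act `A` is indecomposable. -/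
def Indecomposable (S : Type u) [Monoid S] (A : Type u) [RightAct S A] : Prop :=
  ¬ Decomposable S A

/-- A cyclic act: generated by a single element. -/
def CyclicAct (S : Type u) [Monoid S] (A : Type u) [RightAct S A] : Prop :=
  ∃ a : A, ∀ x : A, ∃ s : S, x = a ⊛ s

/-- `A` is a retract of `B`. -/
def IsRetractOf (S : Type u) [Monoid S] (A B : Type u) [RightAct S A] [RightAct S B] : Prop :=
  ∃ (i : A → B) (p : B → A), IsActHom S i ∧ IsActHom S p ∧ ∀ a : A, p (i a) = a

/-- `Q` is an injective act: every homomorphism from a subact `C` of any act `B` into `Q`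
extends to `B`. -/
def ActInjective (S : Type u) [Monoid S] (Q : Type u) [RightAct S Q] : Prop :=
  ∀ (B : Type u) [RightAct S B], ∀ C : Set B, IsSubact S C →
    ∀ f : B → Q, IsActHomOn S f C →
      ∃ g : B → Q, IsActHom S g ∧ Set.EqOn g f C

/-- `Q` is InC-injective: injective relative to all embeddings into indecomposable acts. -/
def InCInjective (S : Type u) [Monoid S] (Q : Type u) [RightAct S Q] : Prop :=
  ∀ (B : Type u) [RightAct S B], Indecomposable S B → ∀ C : Set B, IsSubact S C →
    ∀ f : B → Q, IsActHomOn S f C →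
      ∃ g : B → Q, IsActHom S g ∧ Set.EqOn g f C

/-- `Q` is InD-injective: injective relative to all embeddings of indecomposable acts. -/
def InDInjective (S : Type u) [Monoid S] (Q : Type u) [RightAct S Q] : Prop :=
  ∀ (B : Type u) [RightAct S B], ∀ C : Set B, IsSubact S C → IndecomposableSet S C →
    ∀ f : B → Q, IsActHomOn S f C →
      ∃ g : B → Q, IsActHom S g ∧ Set.EqOn g f C

/-- `Q` is PInD-injective: every monomorphism from an indecomposable subact extends. -/
def PInDInjective (S : Type u) [Monoid S] (Q : Type u) [RightAct S Q] : Prop :=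
  ∀ (B : Type u) [RightAct S B], ∀ C : Set B, IsSubact S C → IndecomposableSet S C →
    ∀ f : B → Q, IsActHomOn S f C → Set.InjOn f C →
      ∃ g : B → Q, IsActHom S g ∧ Set.EqOn g f C

/-- `A` is quasi injective: homomorphisms from subacts of `A` to `A` extend to `A`. -/
def QuasiInjective (S : Type u) [Monoid S] (A : Type u) [RightAct S A] : Prop :=
  ∀ C : Set A, IsSubact S C → ∀ f : A → A, IsActHomOn S f C →
    ∃ g : A → A, IsActHom S g ∧ Set.EqOn g f C

/-- `A` is pseudo injective: monomorphisms from subacts of any act into `A` extend. -/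
def PseudoInjective (S : Type u) [Monoid S] (A : Type u) [RightAct S A] : Prop :=
  ∀ (C : Type u) [RightAct S C], ∀ B : Set C, IsSubact S B →
    ∀ f : C → A, IsActHomOn S f B → Set.InjOn f B →
      ∃ g : C → A, IsActHom S g ∧ Set.EqOn g f B

/-- A subact `Q` of `A` (viewed as an act in its own right) is injective. -/
def ActInjectiveSet (S : Type u) [Monoid S] {A : Type u} [RightAct S A] (Q : Set A) : Prop :=
  ∀ (B : Type u) [RightAct S B], ∀ C : Set B, IsSubact S C →
    ∀ f : B → A, IsActHomOn S f C → (∀ c ∈ C, f c ∈ Q) →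
      ∃ g : B → A, IsActHom S g ∧ (∀ b : B, g b ∈ Q) ∧ Set.EqOn g f C

/-- A subact `Q` of `A` (viewed as an act in its own right) is InD-injective. -/
def InDInjectiveSet (S : Type u) [Monoid S] {A : Type u} [RightAct S A] (Q : Set A) : Prop :=
  ∀ (B : Type u) [RightAct S B], ∀ C : Set B, IsSubact S C → IndecomposableSet S C →
    ∀ f : B → A, IsActHomOn S f C → (∀ c ∈ C, f c ∈ Q) →
      ∃ g : B → A, IsActHom S g ∧ (∀ b : B, g b ∈ Q) ∧ Set.EqOn g f C

/-- A subact `Q` of `A` (viewed as an act in its own right) is PInD-injective. -/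
def PInDInjectiveSet (S : Type u) [Monoid S] {A : Type u} [RightAct S A] (Q : Set A) : Prop :=
  ∀ (B : Type u) [RightAct S B], ∀ C : Set B, IsSubact S C → IndecomposableSet S C →
    ∀ f : B → A, IsActHomOn S f C → Set.InjOn f C → (∀ c ∈ C, f c ∈ Q) →
      ∃ g : B → A, IsActHom S g ∧ (∀ b : B, g b ∈ Q) ∧ Set.EqOn g f C

/-- The monoid `S` as a right act over itself, by multiplication. -/
instance selfAct (S : Type u) [Monoid S] : RightAct S S where
  act a s := a * s
  act_one := mul_one
  act_mul a s t := mul_assoc a s t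
  nonempty := ⟨1⟩

/-- `Q` is weakly injective: homomorphisms from right ideals of `S` into `Q` extend to `S`. -/
def WeaklyInjective (S : Type u) [Monoid S] (Q : Type u) [RightAct S Q] : Prop :=
  ∀ I : Set S, IsSubact S I → ∀ f : S → Q, IsActHomOn S f I →
    ∃ g : S → Q, IsActHom S g ∧ Set.EqOn g f I

/-- The relation whose equivalence closure has the indecomposable components as classes. -/
def ActRel (S : Type u) [Monoid S] {A : Type u} [RightAct S A] (a b : A) : Prop :=
  ∃ s : S, b = a ⊛ s

/-- The indecomposable component of the element `a` of an act. -/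
def ActComponent (S : Type u) [Monoid S] {A : Type u} [RightAct S A] (a : A) : Set A :=
  {b | Relation.EqvGen (ActRel S) a b}


namespace InDAux

variable {S : Type u} [Monoid S] {B C : Type u} [RightAct S B] [RightAct S C]

/-- Action on the disjoint union `B ⊕ C`. -/
def sumAct (x : B ⊕ C) (s : S) : B ⊕ C :=
  match x with
  | .inl b => .inl (b ⊛ s)
  | .inr c => .inr (c ⊛ s)

/-- The pushout relation identifying `inl d` with `inr (f d)` for `d ∈ D`. -/
def pushRel (D : Set B) (f : B → C) : (B ⊕ C) → (B ⊕ C) → Prop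
  | .inl b, .inl b' => b = b' ∨ (b ∈ D ∧ b' ∈ D ∧ f b = f b')
  | .inl b, .inr c => b ∈ D ∧ f b = c
  | .inr c, .inl b => b ∈ D ∧ f b = c
  | .inr c, .inr c' => c = c'

theorem pushRel_equiv (D : Set B) (f : B → C) : Equivalence (pushRel D f) := by
  constructor
  · rintro (b | c)
    · exact Or.inl rfl
    · rfl
  · rintro (b | c) (b' | c') h
    · rcases h with h | ⟨h1, h2, h3⟩
      · exact Or.inl h.symm
      · exact Or.inr ⟨h2, h1, h3.symm⟩
    · exact h
    · exact h
    · exact h.symm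
  · rintro (b | c) (b' | c') (b'' | c'') h1 h2
    · rcases h1 with rfl | ⟨h1a, h1b, h1c⟩
      · exact h2
      · rcases h2 with rfl | ⟨h2a, h2b, h2c⟩
        · exact Or.inr ⟨h1a, h1b, h1c⟩
        · exact Or.inr ⟨h1a, h2b, h1c.trans h2c⟩
    · rcases h1 with rfl | ⟨h1a, h1b, h1c⟩
      · exact h2
      · exact ⟨h1a, h1c.trans h2.2⟩
    · exact Or.inr ⟨h1.1, h2.1, h1.2.trans h2.2.symm⟩
    · exact ⟨h1.1, h1.2.trans h2⟩
    · rcases h2 with rfl | ⟨h2a, h2b, h2c⟩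
      · exact h1
      · exact ⟨h2b, h2c.symm.trans h1.2⟩
    · exact h1.2.symm.trans h2.2
    · exact ⟨h2.1, h2.2.trans h1.symm⟩
    · exact h1.trans h2

theorem sumAct_resp (D : Set B) (f : B → C) (hD : IsSubact S D) (hf : IsActHomOn S f D)
    (s : S) {x y : B ⊕ C} (h : pushRel D f x y) :
    pushRel D f (sumAct x s) (sumAct y s) := by
  rcases x with b | c <;> rcases y with b' | c'
  · rcases h with rfl | ⟨h1, h2, h3⟩
    · exact Or.inl rfl
    · exact Or.inr ⟨hD.2 b h1 s, hD.2 b' h2 s, by rw [hf b h1 s, hf b' h2 s, h3]⟩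
  · exact ⟨hD.2 b h.1 s, by rw [hf b h.1 s, h.2]⟩
  · exact ⟨hD.2 b' h.1 s, by rw [hf b' h.1 s, h.2]⟩
  · exact h ▸ rfl

/-- The pushout act structure on the quotient. -/
def pushAct (D : Set B) (f : B → C) (hD : IsSubact S D) (hf : IsActHomOn S f D) :
    RightAct S (Quot (pushRel D f)) where
  act x s :=
    Quot.lift (fun y => Quot.mk _ (sumAct y s))
      (fun _ _ h => Quot.sound (sumAct_resp D f hD hf s h)) x
  act_one := by
    rintro ⟨b | c⟩
    · show Quot.mk _ (Sum.inl (RightAct.act b (1 : S))) = _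
      rw [RightAct.act_one]
    · show Quot.mk _ (Sum.inr (RightAct.act c (1 : S))) = _
      rw [RightAct.act_one]
  act_mul := by
    rintro ⟨b | c⟩ s t
    · show Quot.mk _ (Sum.inl (RightAct.act (RightAct.act b s) t))
          = Quot.mk _ (Sum.inl (RightAct.act b (s * t)))
      rw [RightAct.act_mul]
    · show Quot.mk _ (Sum.inr (RightAct.act (RightAct.act c s) t))
          = Quot.mk _ (Sum.inr (RightAct.act c (s * t)))
      rw [RightAct.act_mul]
  nonempty := ⟨Quot.mk _ (Sum.inl (Classical.choice (RightAct.nonempty S (A := B))))⟩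

end InDAux

/-- `C` is InD-injective iff for every act `B` containing `C` (via an
embedding `j`) and every family `(c i)` of elements of `C` generating an indecomposable
subact of `C`, there is a homomorphism `f : B → C` with `f (c i) = c i` for all `i`. -/
theorem inDInjective_iff_generators_fixed (S : Type u) [Monoid S]
    (C : Type u) [RightAct S C] :
    InDInjective S C ↔
      ∀ (B : Type u) [RightAct S B] (j : C → B),
        IsActHom S j → Function.Injective j →
        ∀ (I : Type u) (c : I → C),
          IsSubact S {x : C | ∃ (i : I) (s : S), x = c i ⊛ s} →
          IndecomposableSet S {x : C | ∃ (i : I) (s : S), x = c i ⊛ s} →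
          ∃ f : B → C, IsActHom S f ∧ ∀ i : I, f (j (c i)) = c i := by
  constructor
  · -- forward direction
    intro hQ B _ j hjhom hjinj I c hsub hindec
    set D : Set C := {x : C | ∃ (i : I) (s : S), x = c i ⊛ s} with hDdef
    -- j '' D is a subact of B
    have hjD : IsSubact S (j '' D) := by
      refine ⟨hsub.1.image j, ?_⟩
      rintro _ ⟨x, hx, rfl⟩ s
      exact ⟨x ⊛ s, hsub.2 x hx s, hjhom x s⟩
    -- j '' D is indecomposable
    have hjDind : IndecomposableSet S (j '' D) := by
      rintro ⟨B₁, B₂, hB₁, hB₂, hunion, hdisj⟩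
      apply hindec
      refine ⟨{x ∈ D | j x ∈ B₁}, {x ∈ D | j x ∈ B₂}, ?_, ?_, ?_, ?_⟩
      · obtain ⟨b, hb⟩ := hB₁.1
        have : b ∈ j '' D := hunion ▸ Set.mem_union_left _ hb
        obtain ⟨x, hx, rfl⟩ := this
        refine ⟨⟨x, hx, hb⟩, ?_⟩
        rintro a ⟨haD, haB⟩ s
        exact ⟨hsub.2 a haD s, (hjhom a s) ▸ hB₁.2 _ haB s⟩
      · obtain ⟨b, hb⟩ := hB₂.1
        have : b ∈ j '' D := hunion ▸ Set.mem_union_right _ hb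
        obtain ⟨x, hx, rfl⟩ := this
        refine ⟨⟨x, hx, hb⟩, ?_⟩
        rintro a ⟨haD, haB⟩ s
        exact ⟨hsub.2 a haD s, (hjhom a s) ▸ hB₂.2 _ haB s⟩
      · ext x
        constructor
        · rintro (⟨hx, _⟩ | ⟨hx, _⟩) <;> exact hx
        · intro hx
          have : j x ∈ B₁ ∪ B₂ := hunion ▸ ⟨x, hx, rfl⟩
          rcases this with h | h
          · exact Or.inl ⟨hx, h⟩
          · exact Or.inr ⟨hx, h⟩
      · ext x
        simp only [Set.mem_inter_iff, Set.mem_setOf_eq, Set.mem_empty_iff_false, iff_false]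
        rintro ⟨⟨_, h1⟩, ⟨_, h2⟩⟩
        exact absurd (hdisj ▸ Set.mem_inter h1 h2) (Set.notMem_empty _)
    -- the partial homomorphism: inverse of j on j '' D
    have hCne : Nonempty C := RightAct.nonempty S
    set p : B → C := Function.invFun j with hp
    have hpj : ∀ x : C, p (j x) = x := fun x => Function.leftInverse_invFun hjinj x
    have hphom : IsActHomOn S p (j '' D) := by
      rintro _ ⟨x, hx, rfl⟩ s
      rw [← hjhom x s, hpj, hpj]
    obtain ⟨g, hg, hgeq⟩ := hQ B (j '' D) hjD hjDind p hphom
    refine ⟨g, hg, fun i => ?_⟩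
    have hci : c i ∈ D := ⟨i, 1, (RightAct.act_one (c i)).symm⟩
    have : g (j (c i)) = p (j (c i)) := hgeq ⟨c i, hci, rfl⟩
    rw [this, hpj]
  · -- backward direction
    intro h B _ D hD hDind f hf
    -- build the pushout
    letI pA : RightAct S (Quot (InDAux.pushRel D f)) := InDAux.pushAct D f hD hf
    set j : C → Quot (InDAux.pushRel D f) := fun x => Quot.mk _ (Sum.inr x) with hj
    have hjhom : IsActHom S j := fun x s => rfl
    have hjinj : Function.Injective j := by
      intro x y hxy
      have := Quot.eqvGen_exact hxy
      have key : ∀ u v : B ⊕ C, Relation.EqvGen (InDAux.pushRel D f) u v →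
          InDAux.pushRel D f u v := by
        intro u v huv
        induction huv with
        | rel _ _ h => exact h
        | refl u => exact (InDAux.pushRel_equiv D f).refl u
        | symm _ _ _ ih => exact (InDAux.pushRel_equiv D f).symm ih
        | trans _ _ _ _ _ ih1 ih2 => exact (InDAux.pushRel_equiv D f).trans ih1 ih2
      exact key _ _ this
    -- the generated subact of C is f '' D
    obtain ⟨d₀, hd₀⟩ := hD.1
    set c : ↥D → C := fun d => f d.1 with hc
    have hGen : {x : C | ∃ (i : ↥D) (s : S), x = c i ⊛ s} = f '' D := by
      ext x
      constructor
      · rintro ⟨⟨d, hd⟩, s, rfl⟩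
        exact ⟨d ⊛ s, hD.2 d hd s, hf d hd s⟩
      · rintro ⟨d, hd, rfl⟩
        exact ⟨⟨d, hd⟩, 1, (RightAct.act_one _).symm⟩
    have hGsub : IsSubact S {x : C | ∃ (i : ↥D) (s : S), x = c i ⊛ s} := by
      rw [hGen]
      refine ⟨hD.1.image f, ?_⟩
      rintro _ ⟨d, hd, rfl⟩ s
      exact ⟨d ⊛ s, hD.2 d hd s, hf d hd s⟩
    have hGind : IndecomposableSet S {x : C | ∃ (i : ↥D) (s : S), x = c i ⊛ s} := by
      rw [hGen]
      rintro ⟨G₁, G₂, hG₁, hG₂, hunion, hdisj⟩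
      apply hDind
      refine ⟨{d ∈ D | f d ∈ G₁}, {d ∈ D | f d ∈ G₂}, ?_, ?_, ?_, ?_⟩
      · obtain ⟨x, hx⟩ := hG₁.1
        have : x ∈ f '' D := hunion ▸ Set.mem_union_left _ hx
        obtain ⟨d, hd, rfl⟩ := this
        refine ⟨⟨d, hd, hx⟩, ?_⟩
        rintro a ⟨haD, haG⟩ s
        exact ⟨hD.2 a haD s, (hf a haD s) ▸ hG₁.2 _ haG s⟩
      · obtain ⟨x, hx⟩ := hG₂.1
        have : x ∈ f '' D := hunion ▸ Set.mem_union_right _ hx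
        obtain ⟨d, hd, rfl⟩ := this
        refine ⟨⟨d, hd, hx⟩, ?_⟩
        rintro a ⟨haD, haG⟩ s
        exact ⟨hD.2 a haD s, (hf a haD s) ▸ hG₂.2 _ haG s⟩
      · ext d
        constructor
        · rintro (⟨hd, _⟩ | ⟨hd, _⟩) <;> exact hd
        · intro hd
          have : f d ∈ G₁ ∪ G₂ := hunion ▸ ⟨d, hd, rfl⟩
          rcases this with hh | hh
          · exact Or.inl ⟨hd, hh⟩
          · exact Or.inr ⟨hd, hh⟩
      · ext d
        simp only [Set.mem_inter_iff, Set.mem_setOf_eq, Set.mem_empty_iff_false, iff_false]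
        rintro ⟨⟨_, h1⟩, ⟨_, h2⟩⟩
        exact absurd (hdisj ▸ Set.mem_inter h1 h2) (Set.notMem_empty _)
    obtain ⟨F, hFhom, hFfix⟩ := h (Quot (InDAux.pushRel D f)) j hjhom hjinj ↥D c hGsub hGind
    refine ⟨fun b => F (Quot.mk _ (Sum.inl b)), ?_, ?_⟩
    · intro b s
      exact hFhom (Quot.mk _ (Sum.inl b)) s
    · intro d hd
      have hse : Quot.mk (InDAux.pushRel D f) (Sum.inl d) = j (f d) :=
        Quot.sound ⟨hd, rfl⟩
      show F (Quot.mk _ (Sum.inl d)) = f d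
      rw [hse]
      exact hFfix ⟨d, hd⟩
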